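/- Let Ω ⊂ ℝ³ be a measurable set of finite measure, T > 0, β > 0, and let f : (0,T) × Ω → [0,∞) be measurable with M := ess sup_{t ∈ (0,T)} ‖f(t,·)‖_{L⁴(Ω)} < ∞ and N := ∫₀ᵀ ‖f(t,·)‖_{L^{3β}(Ω)}^β dt < ∞. Then f ∈ L^{β + 8/3}((0,T) × Ω) and ∫₀ᵀ ∫_Ω f^{β+8/3} dx dt ≤ M^{8/3} · N. -/

import Mathlib

open MeasureTheory Set

/-!
For each fixed time, Hölder's inequality with exponents `3` and `3/2` applied to
`f^β · f^(8/3)` gives `∫ f^(β+8/3) ≤ (∫ f^(3β))^(1/3) · ‖f‖_4^(8/3)`. Bounding `‖f‖_4` by its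
essential supremum `M` and integrating in time yields `M^(8/3) · N`.
-/

section Interpolation

variable {α : Type*} [MeasurableSpace α] {μ : Measure α} {p q a b r : ℝ}

theorem lintegral_rpow_add_le_mul {g : α → ENNReal} (hg : AEMeasurable g μ)
    (hpq : p.HolderConjugate q) (ha : 0 ≤ a) (hb : 0 ≤ b) :
    ∫⁻ x, g x ^ (a + b) ∂μ ≤
      (∫⁻ x, g x ^ (p * a) ∂μ) ^ (1 / p) * (∫⁻ x, g x ^ (q * b) ∂μ) ^ (1 / q) := by
  have holder := ENNReal.lintegral_mul_le_Lp_mul_Lq μ hpq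
    (hg.pow_const a) (hg.pow_const b)
  simp only [Pi.mul_apply, ← ENNReal.rpow_add_of_nonneg _ _ ha hb, ← ENNReal.rpow_mul,
    mul_comm a, mul_comm b] at holder
  exact holder

theorem lintegral_rpow_add_le_mul_rpow_norm {g : α → ENNReal} (hg : AEMeasurable g μ)
    (hpq : p.HolderConjugate q) (ha : 0 ≤ a) (hb : 0 < b) (hr : q * b = r) :
    ∫⁻ x, g x ^ (a + b) ∂μ ≤
      (∫⁻ x, g x ^ (p * a) ∂μ) ^ (1 / p) * ((∫⁻ x, g x ^ r ∂μ) ^ (1 / r)) ^ b := by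
  subst hr
  have hexp : 1 / (q * b) * b = 1 / q := by field_simp [hpq.symm.pos.ne', hb.ne']
  rw [← ENNReal.rpow_mul, hexp]
  exact lintegral_rpow_add_le_mul hg hpq ha hb.le

theorem lintegral_lintegral_rpow_add_le {τ : Type*} [MeasurableSpace τ] {ν : Measure τ}
    {g : τ → α → ENNReal} (hg : ∀ t, AEMeasurable (g t) μ)
    (hpq : p.HolderConjugate q) (ha : 0 ≤ a) (hb : 0 < b) (hr : q * b = r) {M : ENNReal}
    (hM : ∀ᵐ t ∂ν, (∫⁻ x, g t x ^ r ∂μ) ^ (1 / r) ≤ M) (hM_ne_top : M ≠ ⊤) :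
    ∫⁻ t, ∫⁻ x, g t x ^ (a + b) ∂μ ∂ν ≤
      M ^ b * ∫⁻ t, (∫⁻ x, g t x ^ (p * a) ∂μ) ^ (1 / p) ∂ν := by
  rw [← lintegral_const_mul' _ _ (ENNReal.rpow_ne_top_of_nonneg hb.le hM_ne_top)]
  refine lintegral_mono_ae ?_
  filter_upwards [hM] with t ht
  calc ∫⁻ x, g t x ^ (a + b) ∂μ
      ≤ (∫⁻ x, g t x ^ (p * a) ∂μ) ^ (1 / p) * ((∫⁻ x, g t x ^ r ∂μ) ^ (1 / r)) ^ b :=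
        lintegral_rpow_add_le_mul_rpow_norm (hg t) hpq ha hb hr
    _ ≤ M ^ b * (∫⁻ x, g t x ^ (p * a) ∂μ) ^ (1 / p) := by
        rw [mul_comm]; gcongr

end Interpolation

theorem stmt10_general (Ω : Set (Fin 3 → ℝ))
    (T β : ℝ) (hβ : 0 < β)
    (f : ℝ → (Fin 3 → ℝ) → ℝ) (hf : Measurable (Function.uncurry f))
    (M N : ENNReal)
    (hM : M = essSup
        (fun t => (∫⁻ x in Ω, ENNReal.ofReal (f t x) ^ (4:ℝ)) ^ (1/4 : ℝ))
        (volume.restrict (Ioo 0 T)))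
    (hM' : M < ⊤)
    (hN : N = ∫⁻ t in Ioo 0 T,
        (∫⁻ x in Ω, ENNReal.ofReal (f t x) ^ (3 * β)) ^ (1/3 : ℝ))
    (hN' : N < ⊤) :
    (∫⁻ t in Ioo 0 T, ∫⁻ x in Ω, ENNReal.ofReal (f t x) ^ (β + 8/3)) < ⊤ ∧
    ∫⁻ t in Ioo 0 T, ∫⁻ x in Ω, ENNReal.ofReal (f t x) ^ (β + 8/3)
      ≤ M ^ (8/3 : ℝ) * N := by
  have hconj : (3 : ℝ).HolderConjugate (3 / 2) := by constructor <;> norm_num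
  have hbound : ∫⁻ t in Ioo 0 T, ∫⁻ x in Ω, ENNReal.ofReal (f t x) ^ (β + 8/3)
      ≤ M ^ (8/3 : ℝ) * N := by
    rw [hN]
    exact lintegral_lintegral_rpow_add_le
      (fun t => hf.of_uncurry_left.ennreal_ofReal.aemeasurable) hconj hβ.le
      (by norm_num) (by norm_num) (hM ▸ ENNReal.ae_le_essSup _) hM'.ne
  exact ⟨hbound.trans_lt (ENNReal.mul_lt_top
    (ENNReal.rpow_lt_top_of_nonneg (by norm_num) hM'.ne) hN'), hbound⟩

/-- Mixed-norm interpolation yielding the uniform integrability exponent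
`p_β = β + 8/3` for the temperature: from the `L^∞(0,T;L⁴)` bound `M` and the
`L^β(0,T;L^{3β})` bound `N` one gets `∫∫ f^{β+8/3} ≤ M^{8/3} N`. -/
theorem stmt10 (Ω : Set (Fin 3 → ℝ)) (hΩ : MeasurableSet Ω)
    (hfin : volume Ω < ⊤) (T β : ℝ) (hT : 0 < T) (hβ : 0 < β)
    (f : ℝ → (Fin 3 → ℝ) → ℝ) (hf : Measurable (Function.uncurry f))
    (hnn : ∀ t x, 0 ≤ f t x) (M N : ENNReal)
    (hM : M = essSup
        (fun t => (∫⁻ x in Ω, ENNReal.ofReal (f t x) ^ (4:ℝ)) ^ (1/4 : ℝ))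
        (volume.restrict (Ioo 0 T)))
    (hM' : M < ⊤)
    (hN : N = ∫⁻ t in Ioo 0 T,
        (∫⁻ x in Ω, ENNReal.ofReal (f t x) ^ (3 * β)) ^ (1/3 : ℝ))
    (hN' : N < ⊤) :
    (∫⁻ t in Ioo 0 T, ∫⁻ x in Ω, ENNReal.ofReal (f t x) ^ (β + 8/3)) < ⊤ ∧
    ∫⁻ t in Ioo 0 T, ∫⁻ x in Ω, ENNReal.ofReal (f t x) ^ (β + 8/3)
      ≤ M ^ (8/3 : ℝ) * N :=
  stmt10_general Ω T β hβ f hf M N hM hM' hN hN'
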